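/- arXiv:2008.03214 — 2 statements merged into one kernel-verified Lean document; each statement's English description precedes it below -/
import Mathlib

section
/- Let A, B be Boolean algebras with B complete, let A' ⊆ A be a subalgebra, and let p : A' → B be a homomorphism. Suppose p_1, p_2 : A → B are distinct homomorphisms both extending p. Then there exist homomorphisms q_1, q_2 : A → B extending p and an element a ∈ A such that q_1(a) < q_2(a), and no automorphism σ of B satisfies σ ∘ q_1 = q_2. -/
namespace Stmt8Aux

section BAIdentities

variable {α : Type*} [BooleanAlgebra α]

lemma mix_inf (a x y x' y' : α) :
    ((x ⊓ a) ⊔ (y ⊓ aᶜ)) ⊓ ((x' ⊓ a) ⊔ (y' ⊓ aᶜ)) = ((x ⊓ x') ⊓ a) ⊔ ((y ⊓ y') ⊓ aᶜ) := by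
  rw [inf_sup_right, inf_sup_left, inf_sup_left, inf_inf_inf_comm x a x' a,
    inf_inf_inf_comm x a y' aᶜ, inf_inf_inf_comm y aᶜ x' a, inf_inf_inf_comm y aᶜ y' aᶜ]
  simp

lemma mix_compl (a x y : α) :
    ((x ⊓ a) ⊔ (y ⊓ aᶜ))ᶜ = (xᶜ ⊓ a) ⊔ (yᶜ ⊓ aᶜ) := by
  apply compl_unique
  · rw [mix_inf]; simp
  · rw [sup_sup_sup_comm, ← inf_sup_right, ← inf_sup_right]; simp

lemma mix_self (a z : α) : (z ⊓ a) ⊔ (z ⊓ aᶜ) = z := by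
  rw [← inf_sup_left]; simp

lemma mix_inf_right (a x y : α) : ((x ⊓ a) ⊔ (y ⊓ aᶜ)) ⊓ a = x ⊓ a := by
  rw [inf_sup_right, inf_assoc, inf_assoc]; simp

lemma mix_inf_right_compl (a x y : α) : ((x ⊓ a) ⊔ (y ⊓ aᶜ)) ⊓ aᶜ = y ⊓ aᶜ := by
  rw [inf_sup_right, inf_assoc, inf_assoc]; simp

lemma le_biimp_of_inf_eq {x x' a : α} (h : x ⊓ a = x' ⊓ a) :
    a ≤ (x ⊓ x') ⊔ (xᶜ ⊓ x'ᶜ) := by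
  have h1 : a ⊓ x ≤ x ⊓ x' := by
    refine le_inf inf_le_right ?_
    rw [inf_comm a x, h]; exact inf_le_left
  have h2 : a ⊓ xᶜ ≤ xᶜ ⊓ x'ᶜ := by
    refine le_inf inf_le_right ?_
    rw [le_compl_iff_disjoint_right, disjoint_iff_inf_le]
    have : a ⊓ xᶜ ⊓ x' = ⊥ := by
      rw [inf_right_comm, inf_comm a x', ← h, inf_comm x a, inf_assoc]
      simp
    rw [this]
  calc a = a ⊓ (x ⊔ xᶜ) := by simp
  _ = (a ⊓ x) ⊔ (a ⊓ xᶜ) := inf_sup_left a x xᶜ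
  _ ≤ _ := sup_le_sup h1 h2

lemma inf_eq_of_le_biimp {b b' t : α} (h : t ≤ (b ⊓ b') ⊔ (bᶜ ⊓ b'ᶜ)) :
    b ⊓ t = b' ⊓ t := by
  have key : ∀ u u' : α, t ≤ (u ⊓ u') ⊔ (uᶜ ⊓ u'ᶜ) → u ⊓ t ≤ u' := by
    intro u u' h
    calc u ⊓ t ≤ u ⊓ ((u ⊓ u') ⊔ (uᶜ ⊓ u'ᶜ)) := inf_le_inf_left _ h
    _ = (u ⊓ (u ⊓ u')) ⊔ (u ⊓ (uᶜ ⊓ u'ᶜ)) := inf_sup_left _ _ _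
    _ ≤ u' := by
        apply sup_le (inf_le_right.trans inf_le_right)
        rw [← inf_assoc]; simp
  have h' : t ≤ (b' ⊓ b) ⊔ (b'ᶜ ⊓ bᶜ) := by rwa [inf_comm b' b, inf_comm b'ᶜ bᶜ]
  exact le_antisymm (le_inf (key b b' h) inf_le_right)
    (le_inf (key b' b h') inf_le_right)

end BAIdentities

/-- A partial Boolean homomorphism: a (total) function that is a homomorphism
on a subalgebra `dom`. -/
structure PHom (A B : Type*) [BooleanAlgebra A] [BooleanAlgebra B] where
  dom : Set A
  map : A → B
  top_mem : ⊤ ∈ dom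
  inf_mem : ∀ x ∈ dom, ∀ y ∈ dom, x ⊓ y ∈ dom
  compl_mem : ∀ x ∈ dom, xᶜ ∈ dom
  map_top : map ⊤ = ⊤
  map_inf : ∀ x ∈ dom, ∀ y ∈ dom, map (x ⊓ y) = map x ⊓ map y
  map_compl : ∀ x ∈ dom, map xᶜ = (map x)ᶜ

namespace PHom

section Basic

variable {A B : Type*} [BooleanAlgebra A] [BooleanAlgebra B]

lemma bot_mem (P : PHom A B) : ⊥ ∈ P.dom := by
  have := P.compl_mem ⊤ P.top_mem
  rwa [compl_top] at this

lemma map_bot (P : PHom A B) : P.map ⊥ = ⊥ := by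
  have := P.map_compl ⊤ P.top_mem
  rwa [compl_top, P.map_top, compl_top] at this

lemma sup_mem (P : PHom A B) (x : A) (hx : x ∈ P.dom) (y : A) (hy : y ∈ P.dom) :
    x ⊔ y ∈ P.dom := by
  have := P.compl_mem _ (P.inf_mem _ (P.compl_mem x hx) _ (P.compl_mem y hy))
  rwa [compl_inf, compl_compl, compl_compl] at this

lemma map_sup (P : PHom A B) (x : A) (hx : x ∈ P.dom) (y : A) (hy : y ∈ P.dom) :
    P.map (x ⊔ y) = P.map x ⊔ P.map y := by
  have h1 := P.map_compl _ (P.inf_mem _ (P.compl_mem x hx) _ (P.compl_mem y hy))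
  have h2 := P.map_inf _ (P.compl_mem x hx) _ (P.compl_mem y hy)
  have h3 := P.map_compl x hx
  have h4 := P.map_compl y hy
  rw [compl_inf, compl_compl, compl_compl] at h1
  rw [h2, h3, h4, compl_inf, compl_compl, compl_compl] at h1
  exact h1

lemma mono (P : PHom A B) {x y : A} (hx : x ∈ P.dom) (hy : y ∈ P.dom) (hxy : x ≤ y) :
    P.map x ≤ P.map y := by
  have := P.map_sup x hx y hy
  rw [sup_eq_right.2 hxy] at this
  exact le_of_le_of_eq le_sup_left this.symm

instance : Preorder (PHom A B) where
  le P Q := P.dom ⊆ Q.dom ∧ ∀ x ∈ P.dom, Q.map x = P.map x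
  le_refl P := ⟨subset_rfl, fun _ _ => rfl⟩
  le_trans P Q R h h' :=
    ⟨h.1.trans h'.1, fun x hx => (h'.2 x (h.1 hx)).trans (h.2 x hx)⟩

end Basic

section Complete

variable {A B : Type*} [BooleanAlgebra A] [CompleteBooleanAlgebra B]

/-- Lower Sikorski bound. -/
def lb (P : PHom A B) (a : A) : B := sSup (P.map '' {s | s ∈ P.dom ∧ s ≤ a})

/-- Upper Sikorski bound. -/
def ub (P : PHom A B) (a : A) : B := sInf (P.map '' {s | s ∈ P.dom ∧ a ≤ s})

lemma lb_le_ub (P : PHom A B) (a : A) : P.lb a ≤ P.ub a := by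
  apply sSup_le
  rintro _ ⟨s, ⟨hs, hsa⟩, rfl⟩
  apply le_sInf
  rintro _ ⟨s', ⟨hs', has'⟩, rfl⟩
  exact P.mono hs hs' (hsa.trans has')

variable (P : PHom A B) (a : A) (t : B)

/-- The domain of the one-step extension. -/
def stepDom : Set A :=
  {z | ∃ x, x ∈ P.dom ∧ ∃ y, y ∈ P.dom ∧ z = (x ⊓ a) ⊔ (y ⊓ aᶜ)}

open Classical in
/-- The map of the one-step extension. -/
noncomputable def stepMap : A → B := fun z =>
  if h : ∃ x, x ∈ P.dom ∧ ∃ y, y ∈ P.dom ∧ z = (x ⊓ a) ⊔ (y ⊓ aᶜ) then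
    (P.map h.choose ⊓ t) ⊔ (P.map h.choose_spec.2.choose ⊓ tᶜ)
  else ⊥

variable {P a t}

lemma step_welldef (h1 : P.lb a ≤ t) (h2 : t ≤ P.ub a) {x y x' y' : A}
    (hx : x ∈ P.dom) (hy : y ∈ P.dom) (hx' : x' ∈ P.dom) (hy' : y' ∈ P.dom)
    (heq : (x ⊓ a) ⊔ (y ⊓ aᶜ) = (x' ⊓ a) ⊔ (y' ⊓ aᶜ)) :
    (P.map x ⊓ t) ⊔ (P.map y ⊓ tᶜ) = (P.map x' ⊓ t) ⊔ (P.map y' ⊓ tᶜ) := by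
  have hxa : x ⊓ a = x' ⊓ a := by
    have h := congrArg (· ⊓ a) heq
    simpa only [mix_inf_right] using h
  have hya : y ⊓ aᶜ = y' ⊓ aᶜ := by
    have h := congrArg (· ⊓ aᶜ) heq
    simpa only [mix_inf_right_compl] using h
  have key1 : P.map x ⊓ t = P.map x' ⊓ t := by
    have hle : a ≤ (x ⊓ x') ⊔ (xᶜ ⊓ x'ᶜ) := le_biimp_of_inf_eq hxa
    have hw : (x ⊓ x') ⊔ (xᶜ ⊓ x'ᶜ) ∈ P.dom :=
      P.sup_mem _ (P.inf_mem _ hx _ hx') _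
        (P.inf_mem _ (P.compl_mem _ hx) _ (P.compl_mem _ hx'))
    have htw : t ≤ P.map ((x ⊓ x') ⊔ (xᶜ ⊓ x'ᶜ)) :=
      h2.trans (sInf_le ⟨_, ⟨hw, hle⟩, rfl⟩)
    rw [P.map_sup _ (P.inf_mem _ hx _ hx') _
        (P.inf_mem _ (P.compl_mem _ hx) _ (P.compl_mem _ hx')),
      P.map_inf _ hx _ hx',
      P.map_inf _ (P.compl_mem _ hx) _ (P.compl_mem _ hx'),
      P.map_compl _ hx, P.map_compl _ hx'] at htw
    exact inf_eq_of_le_biimp htw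
  have key2 : P.map y ⊓ tᶜ = P.map y' ⊓ tᶜ := by
    have hle : aᶜ ≤ (y ⊓ y') ⊔ (yᶜ ⊓ y'ᶜ) := le_biimp_of_inf_eq hya
    have hw : (y ⊓ y') ⊔ (yᶜ ⊓ y'ᶜ) ∈ P.dom :=
      P.sup_mem _ (P.inf_mem _ hy _ hy') _
        (P.inf_mem _ (P.compl_mem _ hy) _ (P.compl_mem _ hy'))
    have hle' : ((y ⊓ y') ⊔ (yᶜ ⊓ y'ᶜ))ᶜ ≤ a := by
      have := compl_le_compl hle
      rwa [compl_compl] at this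
    have hwt1 : P.map (((y ⊓ y') ⊔ (yᶜ ⊓ y'ᶜ))ᶜ) ≤ P.lb a :=
      le_sSup ⟨_, ⟨P.compl_mem _ hw, hle'⟩, rfl⟩
    have hwt : P.map (((y ⊓ y') ⊔ (yᶜ ⊓ y'ᶜ))ᶜ) ≤ t := hwt1.trans h1
    rw [P.map_compl _ hw] at hwt
    have htw : tᶜ ≤ P.map ((y ⊓ y') ⊔ (yᶜ ⊓ y'ᶜ)) := by
      have := compl_le_compl hwt
      rwa [compl_compl] at this
    rw [P.map_sup _ (P.inf_mem _ hy _ hy') _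
        (P.inf_mem _ (P.compl_mem _ hy) _ (P.compl_mem _ hy')),
      P.map_inf _ hy _ hy',
      P.map_inf _ (P.compl_mem _ hy) _ (P.compl_mem _ hy'),
      P.map_compl _ hy, P.map_compl _ hy'] at htw
    exact inf_eq_of_le_biimp htw
  rw [key1, key2]

lemma stepMap_spec (h1 : P.lb a ≤ t) (h2 : t ≤ P.ub a) {x y : A}
    (hx : x ∈ P.dom) (hy : y ∈ P.dom) :
    stepMap P a t ((x ⊓ a) ⊔ (y ⊓ aᶜ)) = (P.map x ⊓ t) ⊔ (P.map y ⊓ tᶜ) := by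
  have h : ∃ x', x' ∈ P.dom ∧ ∃ y', y' ∈ P.dom ∧
      (x ⊓ a) ⊔ (y ⊓ aᶜ) = (x' ⊓ a) ⊔ (y' ⊓ aᶜ) := ⟨x, hx, y, hy, rfl⟩
  rw [stepMap]
  rw [dif_pos h]
  exact step_welldef h1 h2 h.choose_spec.1 h.choose_spec.2.choose_spec.1 hx hy
    h.choose_spec.2.choose_spec.2.symm

variable (P a t)

/-- One-step Sikorski extension with prescribed value `t` at `a`. -/
noncomputable def step (h1 : P.lb a ≤ t) (h2 : t ≤ P.ub a) : PHom A B where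
  dom := stepDom P a
  map := stepMap P a t
  top_mem := ⟨⊤, P.top_mem, ⊤, P.top_mem, by simp⟩
  inf_mem := by
    rintro z ⟨x, hx, y, hy, rfl⟩ z' ⟨x', hx', y', hy', rfl⟩
    exact ⟨x ⊓ x', P.inf_mem _ hx _ hx', y ⊓ y', P.inf_mem _ hy _ hy', mix_inf a x y x' y'⟩
  compl_mem := by
    rintro z ⟨x, hx, y, hy, rfl⟩
    exact ⟨xᶜ, P.compl_mem _ hx, yᶜ, P.compl_mem _ hy, mix_compl a x y⟩
  map_top := by
    conv_lhs => rw [show (⊤ : A) = (⊤ ⊓ a) ⊔ (⊤ ⊓ aᶜ) from (mix_self a ⊤).symm]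
    rw [stepMap_spec h1 h2 P.top_mem P.top_mem, P.map_top]
    simp [mix_self]
  map_inf := by
    rintro z ⟨x, hx, y, hy, rfl⟩ z' ⟨x', hx', y', hy', rfl⟩
    rw [mix_inf a x y x' y',
      stepMap_spec h1 h2 (P.inf_mem _ hx _ hx') (P.inf_mem _ hy _ hy'),
      stepMap_spec h1 h2 hx hy, stepMap_spec h1 h2 hx' hy',
      P.map_inf _ hx _ hx', P.map_inf _ hy _ hy', mix_inf t]
  map_compl := by
    rintro z ⟨x, hx, y, hy, rfl⟩
    rw [mix_compl a x y, stepMap_spec h1 h2 (P.compl_mem _ hx) (P.compl_mem _ hy),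
      P.map_compl _ hx, P.map_compl _ hy, stepMap_spec h1 h2 hx hy, mix_compl t]

variable {P a t}

lemma le_step (h1 : P.lb a ≤ t) (h2 : t ≤ P.ub a) : P ≤ P.step a t h1 h2 := by
  constructor
  · intro z hz
    exact ⟨z, hz, z, hz, (mix_self a z).symm⟩
  · intro z hz
    show stepMap P a t z = P.map z
    conv_lhs => rw [show z = (z ⊓ a) ⊔ (z ⊓ aᶜ) from (mix_self a z).symm]
    rw [stepMap_spec h1 h2 hz hz, ← inf_sup_left]
    simp

lemma mem_step (h1 : P.lb a ≤ t) (h2 : t ≤ P.ub a) : a ∈ (P.step a t h1 h2).dom :=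
  ⟨⊤, P.top_mem, ⊥, P.bot_mem, by simp⟩

lemma step_map_self (h1 : P.lb a ≤ t) (h2 : t ≤ P.ub a) :
    (P.step a t h1 h2).map a = t := by
  have h := stepMap_spec h1 h2 P.top_mem P.bot_mem (a := a) (t := t)
  rw [show (⊤ ⊓ a) ⊔ (⊥ ⊓ aᶜ) = a by simp] at h
  show stepMap P a t a = t
  rw [h, P.map_top, P.map_bot]
  simp

open Classical in
/-- The map of the upper bound of a chain. -/
noncomputable def chainMap (c : Set (PHom A B)) : A → B := fun x =>
  if h : ∃ Q, Q ∈ c ∧ x ∈ Q.dom then h.choose.map x else ⊥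

lemma chainMap_eq {c : Set (PHom A B)} (hc : IsChain (· ≤ ·) c) {Q : PHom A B}
    (hQ : Q ∈ c) {x : A} (hx : x ∈ Q.dom) : chainMap c x = Q.map x := by
  have h : ∃ R, R ∈ c ∧ x ∈ R.dom := ⟨Q, hQ, hx⟩
  rw [chainMap]
  rw [dif_pos h]
  obtain ⟨hR, hxR⟩ := h.choose_spec
  rcases hc.total hR hQ with h' | h'
  · exact (h'.2 x hxR).symm
  · exact h'.2 x hx

/-- Upper bound of a nonempty chain of partial homomorphisms. -/
noncomputable def chainSup (c : Set (PHom A B)) (hc : IsChain (· ≤ ·) c)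
    (P₀ : PHom A B) (hP₀ : P₀ ∈ c) : PHom A B where
  dom := {x | ∃ Q, Q ∈ c ∧ x ∈ Q.dom}
  map := chainMap c
  top_mem := ⟨P₀, hP₀, P₀.top_mem⟩
  inf_mem := by
    rintro x ⟨Q, hQ, hx⟩ y ⟨R, hR, hy⟩
    rcases hc.total hQ hR with h' | h'
    · exact ⟨R, hR, R.inf_mem x (h'.1 hx) y hy⟩
    · exact ⟨Q, hQ, Q.inf_mem x hx y (h'.1 hy)⟩
  compl_mem := by
    rintro x ⟨Q, hQ, hx⟩
    exact ⟨Q, hQ, Q.compl_mem x hx⟩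
  map_top := by
    rw [chainMap_eq hc hP₀ P₀.top_mem]; exact P₀.map_top
  map_inf := by
    rintro x ⟨Q, hQ, hx⟩ y ⟨R, hR, hy⟩
    rcases hc.total hQ hR with h' | h'
    · rw [chainMap_eq hc hR (h'.1 hx), chainMap_eq hc hR hy,
        chainMap_eq hc hR (R.inf_mem x (h'.1 hx) y hy)]
      exact R.map_inf x (h'.1 hx) y hy
    · rw [chainMap_eq hc hQ hx, chainMap_eq hc hQ (h'.1 hy),
        chainMap_eq hc hQ (Q.inf_mem x hx y (h'.1 hy))]
      exact Q.map_inf x hx y (h'.1 hy)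
  map_compl := by
    rintro x ⟨Q, hQ, hx⟩
    rw [chainMap_eq hc hQ hx, chainMap_eq hc hQ (Q.compl_mem x hx)]
    exact Q.map_compl x hx

lemma le_chainSup {c : Set (PHom A B)} (hc : IsChain (· ≤ ·) c)
    {P₀ : PHom A B} (hP₀ : P₀ ∈ c) {Q : PHom A B} (hQ : Q ∈ c) :
    Q ≤ chainSup c hc P₀ hP₀ :=
  ⟨fun x hx => ⟨Q, hQ, hx⟩, fun x hx => chainMap_eq hc hQ hx⟩

/-- Sikorski-style extension to a total homomorphism. -/
theorem exists_total (P₀ : PHom A B) :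
    ∃ M : PHom A B, P₀ ≤ M ∧ ∀ x, x ∈ M.dom := by
  obtain ⟨M, hP₀M, hmax⟩ :=
    zorn_le_nonempty₀ (Set.univ : Set (PHom A B))
      (fun c _ hchain Q hQ =>
        ⟨chainSup c hchain Q hQ, Set.mem_univ _, fun R hR => le_chainSup hchain hQ hR⟩)
      P₀ (Set.mem_univ _)
  refine ⟨M, hP₀M, fun a => ?_⟩
  have hle : M ≤ M.step a (M.lb a) le_rfl (M.lb_le_ub a) :=
    le_step le_rfl (M.lb_le_ub a)
  have hback := hmax.2 (Set.mem_univ _) hle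
  exact hback.1 (mem_step le_rfl (M.lb_le_ub a))

end Complete

end PHom

end Stmt8Aux

open Stmt8Aux

/-- Let `B` be complete, `A' ⊆ A` a subalgebra and `f` a homomorphism on `A'`
into `B`. If `f` has two distinct homomorphic extensions `p₁, p₂ : A → B`, then
there are extensions `q₁, q₂ : A → B` of `f` and an element `a` with
`q₁ a < q₂ a` such that no automorphism `σ` of `B` satisfies `σ ∘ q₁ = q₂`. -/
theorem stmt_8 (A B : Type*) [BooleanAlgebra A] [CompleteBooleanAlgebra B]
    (A' : Set A) (hbot : ⊥ ∈ A') (htop : ⊤ ∈ A')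
    (hinf : ∀ x ∈ A', ∀ y ∈ A', x ⊓ y ∈ A')
    (hsup : ∀ x ∈ A', ∀ y ∈ A', x ⊔ y ∈ A')
    (hcompl : ∀ x ∈ A', xᶜ ∈ A')
    (f : A → B)
    (hf_inf : ∀ x ∈ A', ∀ y ∈ A', f (x ⊓ y) = f x ⊓ f y)
    (hf_sup : ∀ x ∈ A', ∀ y ∈ A', f (x ⊔ y) = f x ⊔ f y)
    (hf_compl : ∀ x ∈ A', f xᶜ = (f x)ᶜ)
    (hf_bot : f ⊥ = ⊥) (hf_top : f ⊤ = ⊤)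
    (p₁ p₂ : BoundedLatticeHom A B)
    (hp₁ : ∀ x ∈ A', p₁ x = f x) (hp₂ : ∀ x ∈ A', p₂ x = f x)
    (hne : p₁ ≠ p₂) :
    ∃ q₁ q₂ : BoundedLatticeHom A B,
      (∀ x ∈ A', q₁ x = f x) ∧ (∀ x ∈ A', q₂ x = f x) ∧
      (∃ a : A, q₁ a < q₂ a) ∧
      (∀ σ : B ≃o B, ¬ ∀ x, σ (q₁ x) = q₂ x) := by
  classical
  -- monotonicity of bounded lattice homs
  have hmono : ∀ (p : BoundedLatticeHom A B) {x y : A}, x ≤ y → p x ≤ p y := by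
    intro p x y h
    have h2 : p x ⊔ p y = p y := by rw [← map_sup, sup_eq_right.2 h]
    exact le_of_le_of_eq le_sup_left h2
  -- a point where p₁ and p₂ differ
  obtain ⟨a₀, ha₀⟩ : ∃ a₀, p₁ a₀ ≠ p₂ a₀ := by
    by_contra h
    push_neg at h
    exact hne (DFunLike.ext _ _ h)
  -- the base partial homomorphism
  set base : PHom A B :=
    ⟨A', f, htop, hinf, hcompl, hf_top, hf_inf, hf_compl⟩ with hbase
  set L : B := base.lb a₀ with hL
  -- extend with value L at a₀
  set P₁ : PHom A B := base.step a₀ L le_rfl (base.lb_le_ub a₀) with hP₁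
  obtain ⟨M, hM, hMdom⟩ := PHom.exists_total P₁
  have hbaseP₁ : base ≤ P₁ := PHom.le_step le_rfl (base.lb_le_ub a₀)
  -- q₁ from the total extension
  refine ⟨⟨⟨⟨M.map, fun x y => M.map_sup x (hMdom x) y (hMdom y)⟩,
      fun x y => M.map_inf x (hMdom x) y (hMdom y)⟩, M.map_top, M.map_bot⟩, ?_⟩
  have hq₁A' : ∀ s ∈ A', M.map s = f s := by
    intro s hs
    calc M.map s = P₁.map s := hM.2 s (hbaseP₁.1 hs)
    _ = base.map s := hbaseP₁.2 s hs
    _ = f s := rfl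
  have hq₁a₀ : M.map a₀ = L :=
    (hM.2 a₀ (PHom.mem_step le_rfl (base.lb_le_ub a₀))).trans
      (PHom.step_map_self le_rfl (base.lb_le_ub a₀))
  -- L is below both p₁ a₀ and p₂ a₀
  have hLle : ∀ p : BoundedLatticeHom A B, (∀ x ∈ A', p x = f x) → L ≤ p a₀ := by
    intro p hp
    apply sSup_le
    rintro _ ⟨s, ⟨hs, hsa⟩, rfl⟩
    have : base.map s = p s := (hp s hs).symm
    rw [this]
    exact hmono p hsa
  -- pick q₂ among p₁, p₂ with L < q₂ a₀
  obtain ⟨q₂, hq₂A', hq₂lt⟩ :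
      ∃ q₂ : BoundedLatticeHom A B, (∀ x ∈ A', q₂ x = f x) ∧ L < q₂ a₀ := by
    by_cases hc : p₁ a₀ = L
    · refine ⟨p₂, hp₂, lt_of_le_of_ne (hLle p₂ hp₂) ?_⟩
      intro h
      exact ha₀ (by rw [hc, h])
    · exact ⟨p₁, hp₁, lt_of_le_of_ne (hLle p₁ hp₁) (Ne.symm hc)⟩
  refine ⟨q₂, hq₁A', hq₂A', ⟨a₀, ?_⟩, ?_⟩
  · show M.map a₀ < q₂ a₀
    rw [hq₁a₀]; exact hq₂lt
  · intro σ hσ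
    have hfix : ∀ b ∈ f '' {s | s ∈ A' ∧ s ≤ a₀}, σ b = b := by
      rintro _ ⟨s, ⟨hs, _⟩, rfl⟩
      have h : σ (M.map s) = q₂ s := hσ s
      rw [hq₁A' s hs, hq₂A' s hs] at h
      exact h
    have hσL : σ L = L := by
      have hLdef : L = sSup (f '' {s | s ∈ A' ∧ s ≤ a₀}) := rfl
      have himg : σ '' (f '' {s | s ∈ A' ∧ s ≤ a₀})
          = f '' {s | s ∈ A' ∧ s ≤ a₀} := by
        apply Set.Subset.antisymm
        · rintro _ ⟨b', hb', rfl⟩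
          rw [hfix b' hb']
          exact hb'
        · intro b hb
          exact ⟨b, hb, hfix b hb⟩
      have h1 : σ L = sSup (σ '' (f '' {s | s ∈ A' ∧ s ≤ a₀})) := by
        rw [hLdef]
        exact (OrderIso.map_sSup σ _).trans sSup_image.symm
      rw [h1, himg, ← hLdef]
    have h := hσ a₀
    have h' : σ (M.map a₀) = q₂ a₀ := h
    rw [hq₁a₀, hσL] at h'
    exact hq₂lt.ne h'
end

section
/- Let A, B be Boolean algebras with B complete, A' ⊆ A a subalgebra, p : A' → B a homomorphism, and q_1, q_2 : A → B extensions of p with q_1(a) = b_1 < b_2 = q_2(a) where b_1 = ∑{p(a') : a' ∈ A', a' ≤ a} and b_2 = ∏{p(a') : a' ∈ A', a ≤ a'}. If σ : B → B is a homomorphism with σ ∘ q_1 = q_2, then σ fixes the image of p pointwise, σ(b_1) = b_2, and σ(b_2) = b_2; hence σ is not injective. -/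
/-- With `b₁ = ∑{f a' : a' ∈ A', a' ≤ a}` and `b₂ = ∏{f a' : a' ∈ A', a ≤ a'}`,
`b₁ < b₂`, and `q₁, q₂` extensions of `f` with `q₁ a = b₁`, `q₂ a = b₂`: any
homomorphism `σ : B → B` with `σ ∘ q₁ = q₂` fixes the image of `f` on `A'`
pointwise, sends `b₁` to `b₂`, fixes `b₂`, and hence is not injective. -/
theorem stmt_9 (A B : Type*) [BooleanAlgebra A] [CompleteBooleanAlgebra B]
    (A' : Set A) (hbot : ⊥ ∈ A') (htop : ⊤ ∈ A')
    (hinf : ∀ x ∈ A', ∀ y ∈ A', x ⊓ y ∈ A')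
    (hsup : ∀ x ∈ A', ∀ y ∈ A', x ⊔ y ∈ A')
    (hcompl : ∀ x ∈ A', xᶜ ∈ A')
    (f : A → B)
    (hf_inf : ∀ x ∈ A', ∀ y ∈ A', f (x ⊓ y) = f x ⊓ f y)
    (hf_sup : ∀ x ∈ A', ∀ y ∈ A', f (x ⊔ y) = f x ⊔ f y)
    (hf_compl : ∀ x ∈ A', f xᶜ = (f x)ᶜ)
    (hf_bot : f ⊥ = ⊥) (hf_top : f ⊤ = ⊤)
    (a : A) (b₁ b₂ : B)
    (hb₁ : b₁ = sSup (f '' {x | x ∈ A' ∧ x ≤ a}))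
    (hb₂ : b₂ = sInf (f '' {x | x ∈ A' ∧ a ≤ x}))
    (hlt : b₁ < b₂)
    (q₁ q₂ : BoundedLatticeHom A B)
    (hq₁ : ∀ x ∈ A', q₁ x = f x) (hq₂ : ∀ x ∈ A', q₂ x = f x)
    (hq₁a : q₁ a = b₁) (hq₂a : q₂ a = b₂)
    (σ : BoundedLatticeHom B B) (hσ : ∀ x, σ (q₁ x) = q₂ x) :
    (∀ x ∈ A', σ (f x) = f x) ∧ σ b₁ = b₂ ∧ σ b₂ = b₂ ∧ ¬ Function.Injective σ := by
  have hfix : ∀ x ∈ A', σ (f x) = f x := by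
    intro x hx
    have h := hσ x
    rw [hq₁ x hx, hq₂ x hx] at h
    exact h
  have hσb₁ : σ b₁ = b₂ := by rw [← hq₁a, hσ, hq₂a]
  have hσb₂ : σ b₂ = b₂ := by
    have hle : σ b₂ ≤ b₂ := by
      have hmono : Monotone σ := OrderHomClass.mono σ
      conv_rhs => rw [hb₂]
      apply le_sInf
      rintro _ ⟨x, ⟨hx, hax⟩, rfl⟩
      have : b₂ ≤ f x := hb₂ ▸ sInf_le ⟨x, ⟨hx, hax⟩, rfl⟩
      calc σ b₂ ≤ σ (f x) := hmono this
        _ = f x := hfix x hx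
    have hge : b₂ ≤ σ b₂ := by
      have hmono : Monotone σ := OrderHomClass.mono σ
      calc b₂ = σ b₁ := hσb₁.symm
        _ ≤ σ b₂ := hmono hlt.le
    exact le_antisymm hle hge
  refine ⟨hfix, hσb₁, hσb₂, fun hinj => hlt.ne ?_⟩
  exact hinj (hσb₁.trans hσb₂.symm)
end
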